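/- Fix x, y ∈ ℝⁿ and σ_t > 0. For σ_y > 0 let p_t^{σ_y}(· | y) denote the noise-perturbed denoising posterior density. Then as σ_y → ∞, the posterior score converges to the unconditional score: lim_{σ_y → ∞} ∇_x log p_t^{σ_y}(x | y) = ∇_x log p_t(x). (The limiting behavior of Proposition 1 as the measurement noise level tends to infinity.) -/

import Mathlib

open MeasureTheory Real Filter

/-- Isotropic Gaussian density on ℝⁿ with mean `m` and covariance `v • I`
(`v` is the variance, i.e. `v = σ²`): `N(x; m, σ²I) = (2πσ²)^{-n/2} exp(-‖x-m‖²/(2σ²))`. -/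
noncomputable def gaussDensity (n : ℕ) (v : ℝ) (m x : EuclideanSpace ℝ (Fin n)) : ℝ :=
  (2 * π * v) ^ (-(n : ℝ) / 2) * Real.exp (-‖x - m‖ ^ 2 / (2 * v))

/-!
Prior and posterior are both Gaussian mixtures `z ↦ ∫ w(a) N(z; a, σ_t²I) dμ₀(a)`, with weight
`w ≡ 1` for the prior and `w = N(y; ·, σ_y²I) / Z` for the posterior. Since `∇N` is bounded,
one may differentiate under the integral, so the score of a mixture is `(∫ w ∇N) / (∫ w N)`.
As `σ_y → ∞` the posterior weight tends to `1` pointwise and is eventually bounded by `2`, so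
numerator and denominator converge by dominated convergence.
-/

open InnerProductSpace Topology

theorem exp_neg_sq_div_le_one {v : ℝ} (hv : 0 ≤ v) (t : ℝ) : exp (-t ^ 2 / (2 * v)) ≤ 1 :=
  exp_le_one_iff.2 (div_nonpos_of_nonpos_of_nonneg (neg_nonpos.2 (sq_nonneg t)) (by positivity))

theorem mul_exp_neg_sq_div_le {v : ℝ} (hv : 0 < v) (t : ℝ) :
    t * exp (-t ^ 2 / (2 * v)) ≤ 1 + 2 * v := by
  set s := t ^ 2 / (2 * v) with hs_def
  have hs : s * exp (-s) ≤ 1 :=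
    (mul_exp_neg_le_exp_neg_one s).trans (exp_le_one_iff.2 (by norm_num))
  have ht : t ≤ 1 + 2 * v * s := by
    have : 2 * v * s = t ^ 2 := by rw [hs_def]; field_simp
    nlinarith [sq_nonneg (t - 1)]
  calc t * exp (-t ^ 2 / (2 * v)) = t * exp (-s) := by rw [neg_div]
    _ ≤ (1 + 2 * v * s) * exp (-s) := by gcongr
    _ = exp (-s) + 2 * v * (s * exp (-s)) := by ring
    _ ≤ 1 + 2 * v * 1 := by
        gcongr
        exact exp_le_one_iff.2 (neg_nonpos.2 (by positivity))
    _ = 1 + 2 * v := by ring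

theorem tendsto_exp_neg_div_atTop (c : ℝ) :
    Tendsto (fun v : ℝ => exp (-c / (2 * v))) atTop (𝓝 1) := by
  have h := tendsto_const_nhds (x := -c) |>.div_atTop (tendsto_id.const_mul_atTop two_pos)
  simpa [Function.comp_def] using (continuous_exp.tendsto 0).comp h

theorem integral_withDensity_ofReal {α G : Type*} [MeasurableSpace α] [NormedAddCommGroup G]
    [NormedSpace ℝ G] {μ : Measure α} {ρ : α → ℝ} (hρ : Measurable ρ)
    (hρ0 : ∀ᵐ a ∂μ, 0 ≤ ρ a) (g : α → G) :
    ∫ a, g a ∂μ.withDensity (fun a => ENNReal.ofReal (ρ a)) = ∫ a, ρ a • g a ∂μ := by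
  rw [integral_withDensity_eq_integral_toReal_smul hρ.ennreal_ofReal
    (ae_of_all _ fun _ => ENNReal.ofReal_lt_top)]
  refine integral_congr_ae ?_
  filter_upwards [hρ0] with a ha
  rw [ENNReal.toReal_ofReal ha]

theorem tendsto_integral_smul_of_tendsto_one {α G ι : Type*} [MeasurableSpace α]
    [NormedAddCommGroup G] [NormedSpace ℝ G] {μ : Measure α} {l : Filter ι}
    [l.IsCountablyGenerated] {w : ι → α → ℝ} {f : α → G} {B : ℝ} (hf : Integrable f μ)
    (hw_meas : ∀ᶠ i in l, AEStronglyMeasurable (w i) μ)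
    (hw_bound : ∀ᶠ i in l, ∀ a, ‖w i a‖ ≤ B) (hw_lim : ∀ a, Tendsto (fun i => w i a) l (𝓝 1)) :
    Tendsto (fun i => ∫ a, w i a • f a ∂μ) l (𝓝 (∫ a, f a ∂μ)) := by
  refine tendsto_integral_filter_of_dominated_convergence (fun a => B * ‖f a‖)
    (hw_meas.mono fun i hi => hi.smul hf.aestronglyMeasurable) ?_ (hf.norm.const_mul B)
    (ae_of_all _ fun a => by simpa using (hw_lim a).smul_const (f a))
  filter_upwards [hw_bound] with i hi
  exact ae_of_all _ fun a => (norm_smul_le _ _).trans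
    (mul_le_mul_of_nonneg_right (hi a) (norm_nonneg _))

section

variable {n : ℕ}

noncomputable def gaussDensityGrad (v : ℝ) (m x : EuclideanSpace ℝ (Fin n)) :
    EuclideanSpace ℝ (Fin n) :=
  (gaussDensity n v m x / v) • (m - x)

theorem gaussDensity_pos {v : ℝ} (hv : 0 < v) (m x : EuclideanSpace ℝ (Fin n)) :
    0 < gaussDensity n v m x := by
  unfold gaussDensity
  positivity

theorem gaussDensity_le {v : ℝ} (hv : 0 ≤ v) (m x : EuclideanSpace ℝ (Fin n)) :
    gaussDensity n v m x ≤ (2 * π * v) ^ (-(n : ℝ) / 2) :=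
  mul_le_of_le_one_right (by positivity) (exp_neg_sq_div_le_one hv _)

theorem continuous_gaussDensity_left (v : ℝ) (x : EuclideanSpace ℝ (Fin n)) :
    Continuous fun m => gaussDensity n v m x := by
  unfold gaussDensity
  fun_prop

theorem continuous_gaussDensityGrad_left (v : ℝ) (x : EuclideanSpace ℝ (Fin n)) :
    Continuous fun m => gaussDensityGrad v m x :=
  ((continuous_gaussDensity_left v x).div_const v).smul (continuous_id.sub continuous_const)

theorem hasGradientAt_gaussDensity (v : ℝ) (m x : EuclideanSpace ℝ (Fin n)) :
    HasGradientAt (gaussDensity n v m) (gaussDensityGrad v m x) x := by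
  rw [hasGradientAt_iff_hasFDerivAt]
  refine ((((hasDerivAt_id' _).neg.div_const (2 * v)).exp.const_mul
    ((2 * π * v) ^ (-(n : ℝ) / 2))).comp_hasFDerivAt x
    ((hasFDerivAt_id x).sub_const m).norm_sq).congr_fderiv ?_
  ext h
  simp only [id_eq, Pi.neg_apply, map_sub, ContinuousLinearMap.comp_id, smul_apply, sub_apply,
    coe_innerSL_apply, nsmul_eq_mul, Nat.cast_ofNat, smul_eq_mul, gaussDensityGrad, gaussDensity,
    map_smul, toDual_apply_apply]
  field_simp
  ring

theorem norm_gaussDensityGrad_le {v : ℝ} (hv : 0 < v) (m x : EuclideanSpace ℝ (Fin n)) :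
    ‖gaussDensityGrad v m x‖ ≤ (2 * π * v) ^ (-(n : ℝ) / 2) * (1 + 2 * v) / v := by
  rw [gaussDensityGrad, norm_smul, norm_div, norm_of_nonneg (gaussDensity_pos hv m x).le,
    norm_of_nonneg hv.le, norm_sub_rev, gaussDensity]
  calc _ = (2 * π * v) ^ (-(n : ℝ) / 2) * (‖x - m‖ * exp (-‖x - m‖ ^ 2 / (2 * v))) / v := by
        ring
    _ ≤ _ := by gcongr; exact mul_exp_neg_sq_div_le hv _

noncomputable def gaussMixture (v : ℝ) (μ : Measure (EuclideanSpace ℝ (Fin n)))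
    (w : EuclideanSpace ℝ (Fin n) → ℝ) (z : EuclideanSpace ℝ (Fin n)) : ℝ :=
  ∫ a, w a * gaussDensity n v a z ∂μ

section Mixture

variable {v : ℝ} {μ : Measure (EuclideanSpace ℝ (Fin n))} [IsFiniteMeasure μ]
  {w : EuclideanSpace ℝ (Fin n) → ℝ} {B : ℝ}

theorem integrable_mul_gaussDensity (hv : 0 < v) (hw : Measurable w) (hB : ∀ a, ‖w a‖ ≤ B)
    (z : EuclideanSpace ℝ (Fin n)) : Integrable (fun a => w a * gaussDensity n v a z) μ := by
  refine .of_bound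
    (hw.aestronglyMeasurable.mul (continuous_gaussDensity_left v z).aestronglyMeasurable)
    (B * (2 * π * v) ^ (-(n : ℝ) / 2)) (ae_of_all _ fun a => ?_)
  rw [norm_mul, norm_of_nonneg (gaussDensity_pos hv a z).le]
  exact mul_le_mul (hB a) (gaussDensity_le hv.le a z) (gaussDensity_pos hv a z).le
    ((norm_nonneg _).trans (hB a))

theorem hasGradientAt_gaussMixture (hv : 0 < v) (hw : Measurable w) (hB : ∀ a, ‖w a‖ ≤ B)
    (x : EuclideanSpace ℝ (Fin n)) :
    HasGradientAt (gaussMixture v μ w) (∫ a, w a • gaussDensityGrad v a x ∂μ) x := by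
  set C := (2 * π * v) ^ (-(n : ℝ) / 2) * (1 + 2 * v) / v
  have hmeas (z) : AEStronglyMeasurable (fun a => w a • gaussDensityGrad v a z) μ :=
    hw.aestronglyMeasurable.smul (continuous_gaussDensityGrad_left v z).aestronglyMeasurable
  have hbound (z a) : ‖w a • gaussDensityGrad v a z‖ ≤ B * C :=
    (norm_smul_le _ _).trans (mul_le_mul (hB a) (norm_gaussDensityGrad_le hv a z)
      (norm_nonneg _) ((norm_nonneg _).trans (hB a)))
  have hderiv := hasFDerivAt_integral_of_dominated_of_fderiv_le (μ := μ) (x₀ := x)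
    (F' := fun z a => toDual ℝ _ (w a • gaussDensityGrad v a z)) (bound := fun _ => B * C)
    univ_mem
    (Eventually.of_forall fun z => (integrable_mul_gaussDensity hv hw hB z).aestronglyMeasurable)
    (integrable_mul_gaussDensity hv hw hB x)
    ((toDual ℝ _).continuous.comp_aestronglyMeasurable (hmeas x))
    (ae_of_all _ fun a z _ => by rw [LinearIsometryEquiv.norm_map]; exact hbound z a)
    (integrable_const _)
    (ae_of_all _ fun a z _ => by
      simpa using (hasGradientAt_gaussDensity v a z).hasFDerivAt.const_mul (w a))
  have hcomm : ∫ a, toDual ℝ _ (w a • gaussDensityGrad v a x) ∂μ =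
      toDual ℝ _ (∫ a, w a • gaussDensityGrad v a x ∂μ) :=
    ContinuousLinearMap.integral_comp_commSL (by simp)
      (toDual ℝ _).toContinuousLinearEquiv.toContinuousLinearMap
      (Integrable.of_bound (hmeas x) _ (ae_of_all _ (hbound x)))
  rwa [hasGradientAt_iff_hasFDerivAt, ← hcomm]

theorem gaussMixture_pos [NeZero μ] (hv : 0 < v) (hw : Measurable w) (hw_pos : ∀ a, 0 < w a)
    (hB : ∀ a, ‖w a‖ ≤ B) (z : EuclideanSpace ℝ (Fin n)) : 0 < gaussMixture v μ w z := by
  have hpos (a) : 0 < w a * gaussDensity n v a z := mul_pos (hw_pos a) (gaussDensity_pos hv a z)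
  rw [gaussMixture, integral_pos_iff_support_of_nonneg (fun a => (hpos a).le)
    (integrable_mul_gaussDensity hv hw hB z), Function.support_eq_univ fun a => (hpos a).ne']
  exact Measure.measure_univ_pos.2 (NeZero.ne μ)

theorem gradient_log_gaussMixture [NeZero μ] (hv : 0 < v) (hw : Measurable w)
    (hw_pos : ∀ a, 0 < w a) (hB : ∀ a, ‖w a‖ ≤ B) (x : EuclideanSpace ℝ (Fin n)) :
    gradient (fun z => log (gaussMixture v μ w z)) x =
      (gaussMixture v μ w x)⁻¹ • ∫ a, w a • gaussDensityGrad v a x ∂μ := by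
  refine HasGradientAt.gradient ?_
  have := (hasGradientAt_gaussMixture hv hw hB x).hasFDerivAt.log
    (gaussMixture_pos (μ := μ) hv hw hw_pos hB x).ne'
  rwa [hasGradientAt_iff_hasFDerivAt, map_smulₛₗ]

theorem tendsto_gradient_log_gaussMixture [NeZero μ] {ι : Type*} {l : Filter ι}
    [l.IsCountablyGenerated] {w : ι → EuclideanSpace ℝ (Fin n) → ℝ} (hv : 0 < v)
    (hw_meas : ∀ i, Measurable (w i)) (hw : ∀ᶠ i in l, ∀ a, 0 < w i a ∧ w i a ≤ B)
    (hw_lim : ∀ a, Tendsto (fun i => w i a) l (𝓝 1)) (x : EuclideanSpace ℝ (Fin n)) :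
    Tendsto (fun i => gradient (fun z => log (gaussMixture v μ (w i) z)) x) l
      (𝓝 (gradient (fun z => log (gaussMixture v μ (fun _ => 1) z)) x)) := by
  have hw_bound : ∀ᶠ i in l, ∀ a, ‖w i a‖ ≤ B := hw.mono fun i hi a => by
    rw [norm_of_nonneg (hi a).1.le]
    exact (hi a).2
  have hw_aesm := Eventually.of_forall (f := l) fun i => (hw_meas i).aestronglyMeasurable (μ := μ)
  have hdensity : Tendsto (fun i => gaussMixture v μ (w i) x) l
      (𝓝 (gaussMixture v μ (fun _ => 1) x)) := by
    simpa [gaussMixture] using tendsto_integral_smul_of_tendsto_one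
      (integrable_mul_gaussDensity (w := fun _ => 1) (B := 1) hv measurable_const (by simp) x)
      hw_aesm hw_bound hw_lim
  have hgradient : Tendsto (fun i => ∫ a, w i a • gaussDensityGrad v a x ∂μ) l
      (𝓝 (∫ a, (1 : ℝ) • gaussDensityGrad v a x ∂μ)) := by
    simpa using tendsto_integral_smul_of_tendsto_one
      (Integrable.of_bound (continuous_gaussDensityGrad_left v x).aestronglyMeasurable _
        (ae_of_all _ fun a => norm_gaussDensityGrad_le hv a x))
      hw_aesm hw_bound hw_lim
  have hdensity_pos := gaussMixture_pos (μ := μ) hv measurable_const (fun _ => one_pos) (B := 1)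
    (by simp) x
  rw [gradient_log_gaussMixture hv measurable_const (fun _ => one_pos) (B := 1) (by simp) x]
  refine ((hdensity.inv₀ hdensity_pos.ne').smul hgradient).congr' ?_
  filter_upwards [hw, hw_bound] with i hi hbi
  rw [gradient_log_gaussMixture hv (hw_meas i) (fun a => (hi a).1) hbi x]

end Mixture

noncomputable def posteriorWeight (μ : Measure (EuclideanSpace ℝ (Fin n))) (v : ℝ)
    (y a : EuclideanSpace ℝ (Fin n)) : ℝ :=
  exp (-‖y - a‖ ^ 2 / (2 * v)) / ∫ a', exp (-‖y - a'‖ ^ 2 / (2 * v)) ∂μ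

section Posterior

variable {μ : Measure (EuclideanSpace ℝ (Fin n))} {v : ℝ}

theorem gaussDensity_div_integral_eq_posteriorWeight (hv : 0 < v)
    (y a : EuclideanSpace ℝ (Fin n)) :
    gaussDensity n v a y / ∫ a', gaussDensity n v a' y ∂μ = posteriorWeight μ v y a := by
  unfold gaussDensity
  rw [integral_const_mul, mul_div_mul_left _ _ (by positivity), posteriorWeight]

theorem continuous_posteriorWeight (μ : Measure (EuclideanSpace ℝ (Fin n))) (v : ℝ)
    (y : EuclideanSpace ℝ (Fin n)) : Continuous (posteriorWeight μ v y) :=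
  (by fun_prop : Continuous fun a => exp (-‖y - a‖ ^ 2 / (2 * v))).div_const _

theorem posteriorWeight_nonneg (y a : EuclideanSpace ℝ (Fin n)) :
    0 ≤ posteriorWeight μ v y a :=
  div_nonneg (exp_pos _).le (integral_nonneg fun _ => (exp_pos _).le)

variable [IsProbabilityMeasure μ]

theorem tendsto_integral_exp_neg_sq_div_atTop (y : EuclideanSpace ℝ (Fin n)) :
    Tendsto (fun v => ∫ a, exp (-‖y - a‖ ^ 2 / (2 * v)) ∂μ) atTop (𝓝 1) := by
  simpa using tendsto_integral_smul_of_tendsto_one (μ := μ) (f := fun _ => (1 : ℝ))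
    (integrable_const 1)
    (Eventually.of_forall fun v =>
      (by fun_prop : Continuous fun a => exp (-‖y - a‖ ^ 2 / (2 * v))).aestronglyMeasurable)
    ((eventually_ge_atTop 0).mono fun v hv a => by
      rw [norm_of_nonneg (exp_pos _).le]
      exact exp_neg_sq_div_le_one hv _)
    (fun a => tendsto_exp_neg_div_atTop _)

theorem tendsto_posteriorWeight_atTop (y a : EuclideanSpace ℝ (Fin n)) :
    Tendsto (fun v => posteriorWeight μ v y a) atTop (𝓝 1) := by
  have h := (tendsto_exp_neg_div_atTop (‖y - a‖ ^ 2)).div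
    (tendsto_integral_exp_neg_sq_div_atTop (μ := μ) y) one_ne_zero
  rw [div_one] at h
  exact h

theorem eventually_posteriorWeight_pos_le_two (y : EuclideanSpace ℝ (Fin n)) :
    ∀ᶠ v in atTop, ∀ a, 0 < posteriorWeight μ v y a ∧ posteriorWeight μ v y a ≤ 2 := by
  have hZ_large := (tendsto_integral_exp_neg_sq_div_atTop (μ := μ) y).eventually
    (eventually_gt_nhds one_half_lt_one)
  filter_upwards [eventually_ge_atTop 0, hZ_large] with v hv hZ a
  have hZ0 : 0 < ∫ a, exp (-‖y - a‖ ^ 2 / (2 * v)) ∂μ := one_half_pos.trans hZ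
  refine ⟨div_pos (exp_pos _) hZ0, (div_le_iff₀ hZ0).2 ?_⟩
  linarith [exp_neg_sq_div_le_one hv ‖y - a‖]

end Posterior

end

theorem posterior_score_tendsto_prior_score_general
    (n : ℕ)
    (μ₀ : Measure (EuclideanSpace ℝ (Fin n))) [IsProbabilityMeasure μ₀]
    (σt : ℝ) (hσt : 0 < σt)
    (x y : EuclideanSpace ℝ (Fin n))
    -- the noise-perturbed prior density `p_t(x) = ∫ N(x; x₀, σ_t² I) dμ₀(x₀)`
    (pt : EuclideanSpace ℝ (Fin n) → ℝ)
    (hpt : ∀ x', pt x' = ∫ x₀, gaussDensity n (σt ^ 2) x₀ x' ∂μ₀)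
    -- for each measurement noise level `σ_y > 0`, the noise-perturbed denoising posterior
    -- density `p_t^{σ_y}(x' | y) = ∫ N(x'; x₀, σ_t² I) dμ₀^{y,σ_y}(x₀)`, where `μ₀^{y,σ_y}`
    -- has density `N(y; x₀, σ_y² I)/Z` with respect to `μ₀`
    (ppost : ℝ → EuclideanSpace ℝ (Fin n) → ℝ)
    (hppost : ∀ σy : ℝ, 0 < σy → ∀ x', ppost σy x' =
      ∫ x₀, gaussDensity n (σt ^ 2) x₀ x'
        ∂(μ₀.withDensity (fun x₀ => ENNReal.ofReal
            (gaussDensity n (σy ^ 2) x₀ y / ∫ x₀', gaussDensity n (σy ^ 2) x₀' y ∂μ₀)))) :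
    Tendsto (fun σy : ℝ => gradient (fun z => Real.log (ppost σy z)) x) atTop
      (nhds (gradient (fun z => Real.log (pt z)) x)) := by
  have hprior : pt = gaussMixture (σt ^ 2) μ₀ fun _ => 1 :=
    funext fun z => by simp [hpt, gaussMixture]
  have hposterior (σy : ℝ) (hσy : 0 < σy) :
      ppost σy = gaussMixture (σt ^ 2) μ₀ (posteriorWeight μ₀ (σy ^ 2) y) := by
    funext z
    simp_rw [hppost σy hσy z, gaussDensity_div_integral_eq_posteriorWeight (pow_pos hσy 2)]
    exact integral_withDensity_ofReal (continuous_posteriorWeight _ _ _).measurable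
      (ae_of_all _ fun _ => posteriorWeight_nonneg _ _) _
  have hsq : Tendsto (fun σy : ℝ => σy ^ 2) atTop atTop := tendsto_pow_atTop two_ne_zero
  rw [hprior]
  refine (tendsto_gradient_log_gaussMixture (pow_pos hσt 2)
    (fun σy => (continuous_posteriorWeight _ _ y).measurable)
    (hsq.eventually (eventually_posteriorWeight_pos_le_two (μ := μ₀) y))
    (fun a => (tendsto_posteriorWeight_atTop y a).comp hsq) x).congr' ?_
  filter_upwards [eventually_gt_atTop 0] with σy hσy
  rw [hposterior σy hσy]

/-- The limiting behavior of Proposition 1 as the measurement noise level tends to infinity: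
for fixed `x, y` and `σ_t > 0`, the denoising posterior score converges to the unconditional
score, `lim_{σ_y → ∞} ∇ log p_t^{σ_y}(x | y) = ∇ log p_t(x)`. -/
theorem posterior_score_tendsto_prior_score
    (n : ℕ) (hn : 1 ≤ n)
    (μ₀ : Measure (EuclideanSpace ℝ (Fin n))) [IsProbabilityMeasure μ₀]
    (σt : ℝ) (hσt : 0 < σt)
    (x y : EuclideanSpace ℝ (Fin n))
    -- the noise-perturbed prior density `p_t(x) = ∫ N(x; x₀, σ_t² I) dμ₀(x₀)`
    (pt : EuclideanSpace ℝ (Fin n) → ℝ)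
    (hpt : ∀ x', pt x' = ∫ x₀, gaussDensity n (σt ^ 2) x₀ x' ∂μ₀)
    -- for each measurement noise level `σ_y > 0`, the noise-perturbed denoising posterior
    -- density `p_t^{σ_y}(x' | y) = ∫ N(x'; x₀, σ_t² I) dμ₀^{y,σ_y}(x₀)`, where `μ₀^{y,σ_y}`
    -- has density `N(y; x₀, σ_y² I)/Z` with respect to `μ₀`
    (ppost : ℝ → EuclideanSpace ℝ (Fin n) → ℝ)
    (hppost : ∀ σy : ℝ, 0 < σy → ∀ x', ppost σy x' =
      ∫ x₀, gaussDensity n (σt ^ 2) x₀ x'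
        ∂(μ₀.withDensity (fun x₀ => ENNReal.ofReal
            (gaussDensity n (σy ^ 2) x₀ y / ∫ x₀', gaussDensity n (σy ^ 2) x₀' y ∂μ₀)))) :
    Tendsto (fun σy : ℝ => gradient (fun z => Real.log (ppost σy z)) x) atTop
      (nhds (gradient (fun z => Real.log (pt z)) x)) :=
  posterior_score_tendsto_prior_score_general n μ₀ σt hσt x y pt hpt ppost hppost
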